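/- (Fundamental Morphism Theorem in Grphs) Let f : A → B be a morphism in the category Grphs of multigraphs with graph morphisms. Let q : A → I be a coequalizer of the kernel pair of f (the two projections R_f ⇉ A from the pullback of f along itself), and let q* : I* → B be an equalizer of the cokernel pair of f (the two coprojections B ⇉ R_f* from the pushout of f along itself). Then the unique morphism h : I → I* satisfying q* ∘ h ∘ q = f is an isomorphism. -/

import Mathlib

/-- A multigraph: a vertex type, an edge type, and an incidence function
assigning to each edge an unordered pair of vertices. -/
structure Multigraph : Type 1 where
  V : Type
  E : Type
  ψ : E → Sym2 V

namespace Multigraph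

/-- The part set of a multigraph: vertices together with edges. -/
abbrev Part (G : Multigraph) : Type := G.V ⊕ G.E

/-- The incidence function extended to parts: a vertex `v` is incident to `{v,v}`. -/
def incid (G : Multigraph) : G.Part → Sym2 G.V
  | Sum.inl v => s(v, v)
  | Sum.inr e => G.ψ e

/-- A graph morphism: a function on part sets mapping vertices to vertices and
preserving incidence.  (The vertex map is recorded separately, but it is uniquely
determined by the part map.) -/
@[ext]
structure Hom (G H : Multigraph) where
  partMap : G.Part → H.Part
  vertMap : G.V → H.V
  partMap_vert : ∀ v : G.V, partMap (Sum.inl v) = Sum.inl (vertMap v)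
  incid_partMap : ∀ p : G.Part, H.incid (partMap p) = (G.incid p).map vertMap

/-- The identity graph morphism. -/
def Hom.id (G : Multigraph) : Hom G G where
  partMap := _root_.id
  vertMap := _root_.id
  partMap_vert := fun _ => rfl
  incid_partMap := fun p => by simp

/-- Composition of graph morphisms. -/
def Hom.comp {G H K : Multigraph} (g : Hom H K) (f : Hom G H) : Hom G K where
  partMap := g.partMap ∘ f.partMap
  vertMap := g.vertMap ∘ f.vertMap
  partMap_vert := fun v => by simp [f.partMap_vert, g.partMap_vert]
  incid_partMap := fun p => by
    simp [Function.comp, g.incid_partMap, f.incid_partMap, Sym2.map_map]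

/-- A strict graph morphism: a graph morphism that moreover maps edges to edges. -/
@[ext]
structure StrictHom (G H : Multigraph) extends Hom G H where
  edgeMap : G.E → H.E
  partMap_edge : ∀ e : G.E, partMap (Sum.inr e) = Sum.inr (edgeMap e)

/-- The identity strict graph morphism. -/
def StrictHom.id (G : Multigraph) : StrictHom G G where
  toHom := Hom.id G
  edgeMap := _root_.id
  partMap_edge := fun _ => rfl

/-- Composition of strict graph morphisms. -/
def StrictHom.comp {G H K : Multigraph} (g : StrictHom H K) (f : StrictHom G H) :
    StrictHom G K where
  toHom := g.toHom.comp f.toHom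
  edgeMap := g.edgeMap ∘ f.edgeMap
  partMap_edge := fun e => by
    simp [Hom.comp, f.partMap_edge, g.partMap_edge]

/-!
A coequalizer `q` is surjective on parts: it factors through the inclusion of its image
subgraph, and the coequalizer property splits that inclusion. An equalizer `q*` is a
monomorphism, and testing against the one-edge graph shows that monomorphisms are injective on
parts. Testing the kernel pair against the one-edge graph as well shows that `q` identifies any
two parts that `f` identifies, and mapping the cokernel pair to two copies of `B` glued along
the image of `f` shows that `q*` lands in that image. Hence `h` is bijective on parts, and a
morphism bijective on parts is an isomorphism.
-/

theorem Hom.partMap_injective {G H : Multigraph} :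
    Function.Injective (Hom.partMap : Hom G H → G.Part → H.Part) := by
  intro f g hp
  have hv : f.vertMap = g.vertMap := funext fun v =>
    Sum.inl.inj (by rw [← f.partMap_vert, ← g.partMap_vert, hp])
  cases f; cases g; cases hp; cases hv; rfl

@[simp]
theorem Hom.comp_partMap {G H K : Multigraph} (g : Hom H K) (f : Hom G H) (p : G.Part) :
    (g.comp f).partMap p = g.partMap (f.partMap p) := rfl

@[simp]
theorem Hom.id_partMap {G : Multigraph} (p : G.Part) : (Hom.id G).partMap p = p := rfl

theorem Hom.comp_assoc {G H K L : Multigraph} (h : Hom K L) (g : Hom H K) (f : Hom G H) :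
    (h.comp g).comp f = h.comp (g.comp f) := rfl

theorem Hom.id_comp {G H : Multigraph} (f : Hom G H) : (Hom.id H).comp f = f := rfl

theorem Hom.mem_range_vertMap_of_mem_incid {G H : Multigraph} (m : Hom G H)
    {p : G.Part} {v : H.V} (hv : v ∈ H.incid (m.partMap p)) : v ∈ Set.range m.vertMap := by
  rw [m.incid_partMap] at hv
  obtain ⟨a, -, ha⟩ := Sym2.mem_map.mp hv
  exact ⟨a, ha⟩

theorem Hom.mem_range_vertMap_of_partMap_eq_inl {G H : Multigraph} (m : Hom G H)
    {p : G.Part} {v : H.V} (hp : m.partMap p = Sum.inl v) : v ∈ Set.range m.vertMap :=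
  m.mem_range_vertMap_of_mem_incid (p := p) (hp ▸ Sym2.mem_mk_left v v)

theorem Hom.vertMap_bijective_of_partMap_bijective {G H : Multigraph} {f : Hom G H}
    (hf : Function.Bijective f.partMap) : Function.Bijective f.vertMap := by
  refine ⟨fun v w hvw => Sum.inl.inj (hf.1 ?_), fun w => ?_⟩
  · rw [f.partMap_vert, f.partMap_vert, hvw]
  · obtain ⟨p, hp⟩ := hf.2 (Sum.inl w)
    exact f.mem_range_vertMap_of_partMap_eq_inl hp

theorem Hom.exists_inverse_of_bijective {G H : Multigraph} (f : Hom G H)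
    (hf : Function.Bijective f.partMap) :
    ∃ g : Hom H G, g.comp f = Hom.id G ∧ f.comp g = Hom.id H := by
  have hv := f.vertMap_bijective_of_partMap_bijective hf
  let eP := Equiv.ofBijective _ hf
  let eV := Equiv.ofBijective _ hv
  refine ⟨⟨eP.symm, eV.symm, fun w => eP.injective ?_, fun q => ?_⟩,
    Hom.partMap_injective (funext eP.symm_apply_apply),
    Hom.partMap_injective (funext eP.apply_symm_apply)⟩
  · change f.partMap (eP.symm _) = f.partMap _
    rw [f.partMap_vert]
    exact (eP.apply_symm_apply _).trans (congrArg Sum.inl (eV.apply_symm_apply w).symm)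
  · apply Sym2.map.injective hv.1
    rw [← f.incid_partMap, Sym2.map_map]
    change H.incid (eP (eP.symm q)) = (H.incid q).map (eV ∘ eV.symm)
    rw [eP.apply_symm_apply, eV.self_comp_symm, Sym2.map_id]
    rfl

def Hom.IsMono {G H : Multigraph} (m : Hom G H) : Prop :=
  ∀ ⦃X : Multigraph⦄ (u v : Hom X G), m.comp u = m.comp v → u = v

theorem Hom.isMono_of_isEqualizer {B C E : Multigraph} {i0 i1 : Hom B C} {e : Hom E B}
    (he : i0.comp e = i1.comp e)
    (heUniv : ∀ (X : Multigraph) (m : Hom X B), i0.comp m = i1.comp m →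
      ∃! t : Hom X E, e.comp t = m) :
    e.IsMono := by
  intro X u v huv
  have hu : i0.comp (e.comp u) = i1.comp (e.comp u) := by
    rw [← Hom.comp_assoc, he, Hom.comp_assoc]
  exact (heUniv X _ hu).unique rfl huv.symm

def singleEdge : Multigraph := ⟨Bool, Unit, fun _ => s(false, true)⟩

def singleEdge.edge : singleEdge.Part := Sum.inr ()

/-- `p` may be a vertex, the edge of `singleEdge` is then collapsed onto it. -/
def Hom.ofPart {G : Multigraph} (p : G.Part) (x y : G.V) (hp : G.incid p = s(x, y)) :
    Hom singleEdge G where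
  partMap := Sum.elim (fun b => Sum.inl (cond b y x)) fun _ => p
  vertMap b := cond b y x
  partMap_vert _ := rfl
  incid_partMap
    | Sum.inl b => by cases b <;> rfl
    | Sum.inr _ => hp

theorem Hom.exists_comp_eq_of_partMap_eq {G H : Multigraph} (m : Hom G H) {p p' : G.Part}
    (hpp' : m.partMap p = m.partMap p') :
    ∃ a b : Hom singleEdge G, a.partMap singleEdge.edge = p ∧ b.partMap singleEdge.edge = p' ∧
      m.comp a = m.comp b := by
  induction hxy : G.incid p using Sym2.ind with | _ x y => ?_
  induction hxy' : G.incid p' using Sym2.ind with | _ x' y' => ?_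
  have hends : s(m.vertMap x, m.vertMap y) = s(m.vertMap x', m.vertMap y') := by
    have h := congrArg H.incid hpp'
    rwa [m.incid_partMap, m.incid_partMap, hxy, hxy'] at h
  have key : ∀ a b, G.incid p' = s(a, b) → m.vertMap x = m.vertMap a →
      m.vertMap y = m.vertMap b → ∃ a b : Hom singleEdge G, a.partMap singleEdge.edge = p ∧
        b.partMap singleEdge.edge = p' ∧ m.comp a = m.comp b := by
    intro a b hab ha hb
    refine ⟨Hom.ofPart p x y hxy, Hom.ofPart p' a b hab, rfl, rfl,
      Hom.partMap_injective (funext ?_)⟩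
    rintro ((_ | _) | _)
    · exact (m.partMap_vert x).trans ((congrArg Sum.inl ha).trans (m.partMap_vert a).symm)
    · exact (m.partMap_vert y).trans ((congrArg Sum.inl hb).trans (m.partMap_vert b).symm)
    · exact hpp'
  rcases Sym2.eq_iff.mp hends with ⟨hx, hy⟩ | ⟨hx, hy⟩
  · exact key x' y' hxy' hx hy
  · exact key y' x' (hxy'.trans Sym2.eq_swap) hx hy

theorem Hom.IsMono.partMap_injective {G H : Multigraph} {m : Hom G H} (hm : m.IsMono) :
    Function.Injective m.partMap := by
  intro p p' hpp'
  obtain ⟨a, b, rfl, rfl, hab⟩ := m.exists_comp_eq_of_partMap_eq hpp'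
  rw [hm a b hab]

theorem Hom.partMap_eq_of_kernelPair {A B I R : Multigraph} {f : Hom A B} {p0 p1 : Hom R A}
    (hkerUniv : ∀ (X : Multigraph) (a b : Hom X A), f.comp a = f.comp b →
      ∃! t : Hom X R, p0.comp t = a ∧ p1.comp t = b)
    {q : Hom A I} (hq : q.comp p0 = q.comp p1) {p p' : A.Part}
    (hpp' : f.partMap p = f.partMap p') : q.partMap p = q.partMap p' := by
  obtain ⟨a, b, rfl, rfl, hab⟩ := f.exists_comp_eq_of_partMap_eq hpp'
  obtain ⟨t, ⟨rfl, rfl⟩, -⟩ := hkerUniv _ a b hab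
  exact congrArg (·.partMap (t.partMap singleEdge.edge)) hq

structure Subgraph (G : Multigraph) where
  verts : Set G.V
  edges : Set G.E
  mem_verts_of_mem_edges : ∀ e ∈ edges, ∀ v ∈ G.ψ e, v ∈ verts

namespace Subgraph

variable {G : Multigraph} (S : Subgraph G)

def parts : Set G.Part := Sum.elim S.verts S.edges

@[simp]
theorem inl_mem_parts {v : G.V} : Sum.inl v ∈ S.parts ↔ v ∈ S.verts := Iff.rfl

abbrev toMultigraph : Multigraph where
  V := S.verts
  E := S.edges
  ψ e := (G.ψ e.1).attachWith (S.mem_verts_of_mem_edges e.1 e.2)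

def incl : Hom S.toMultigraph G where
  partMap := Sum.map Subtype.val Subtype.val
  vertMap := Subtype.val
  partMap_vert _ := rfl
  incid_partMap
    | Sum.inl _ => rfl
    | Sum.inr e => (Sym2.attachWith_map_subtypeVal (S.mem_verts_of_mem_edges e.1 e.2)).symm

theorem incl_partMap_injective : Function.Injective S.incl.partMap :=
  Sum.map_injective.mpr ⟨Subtype.val_injective, Subtype.val_injective⟩

theorem incl_isMono : S.incl.IsMono := fun _ _ _ huv =>
  Hom.partMap_injective (funext fun p => S.incl_partMap_injective (congrArg (·.partMap p) huv))

theorem incl_partMap_mem (p : S.toMultigraph.Part) : S.incl.partMap p ∈ S.parts := by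
  rcases p with ⟨v, hv⟩ | ⟨e, he⟩
  exacts [hv, he]

def restrictPart : (p : G.Part) → p ∈ S.parts → S.toMultigraph.Part
  | Sum.inl v, hv => Sum.inl ⟨v, hv⟩
  | Sum.inr e, he => Sum.inr ⟨e, he⟩

theorem incl_partMap_restrictPart (p : G.Part) (hp : p ∈ S.parts) :
    S.incl.partMap (S.restrictPart p hp) = p := by
  cases p <;> rfl

def codRestrict {X : Multigraph} (m : Hom X G) (hm : ∀ p, m.partMap p ∈ S.parts) :
    Hom X S.toMultigraph where
  partMap p := S.restrictPart (m.partMap p) (hm p)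
  vertMap v := ⟨m.vertMap v, by simpa only [m.partMap_vert, inl_mem_parts] using hm (Sum.inl v)⟩
  partMap_vert v := S.incl_partMap_injective <| by
    rw [incl_partMap_restrictPart]
    exact m.partMap_vert v
  incid_partMap p := Sym2.map.injective (f := S.incl.vertMap) Subtype.val_injective <| by
    rw [← S.incl.incid_partMap, incl_partMap_restrictPart, m.incid_partMap, Sym2.map_map]
    rfl

theorem incl_comp_codRestrict {X : Multigraph} (m : Hom X G) (hm : ∀ p, m.partMap p ∈ S.parts) :
    S.incl.comp (S.codRestrict m hm) = m :=
  Hom.partMap_injective (funext fun _ => S.incl_partMap_restrictPart _ _)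

/-- `a` in the second of two copies of `α` glued along `s`. -/
noncomputable def secondCopy {α : Type} (s : Set α) (a : α) : α ⊕ {a // a ∉ s} := by
  classical
  exact if h : a ∈ s then Sum.inl a else Sum.inr ⟨a, h⟩

theorem secondCopy_eq_inl_iff {α : Type} {s : Set α} {a : α} :
    secondCopy s a = Sum.inl a ↔ a ∈ s := by
  unfold secondCopy
  split_ifs with h <;> simp [h]

/-- Two copies of `G` glued along `S`. -/
noncomputable def double : Multigraph where
  V := G.V ⊕ {v // v ∉ S.verts}
  E := G.E ⊕ {e // e ∉ S.edges}
  ψ := Sum.elim (fun e => (G.ψ e).map Sum.inl) fun e => (G.ψ e.1).map (secondCopy S.verts)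

noncomputable def doubleInl : Hom G S.double where
  partMap := Sum.map Sum.inl Sum.inl
  vertMap := Sum.inl
  partMap_vert _ := rfl
  incid_partMap
    | Sum.inl _ => rfl
    | Sum.inr _ => rfl

noncomputable def doubleInr : Hom G S.double where
  partMap := Sum.map (secondCopy S.verts) (secondCopy S.edges)
  vertMap := secondCopy S.verts
  partMap_vert _ := rfl
  incid_partMap
    | Sum.inl _ => rfl
    | Sum.inr e => by
      change S.double.incid (Sum.inr (secondCopy S.edges e)) = (G.ψ e).map _
      by_cases he : e ∈ S.edges
      · rw [secondCopy_eq_inl_iff.mpr he]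
        exact Sym2.map_congr fun v hv =>
          (secondCopy_eq_inl_iff.mpr (S.mem_verts_of_mem_edges e he v hv)).symm
      · unfold secondCopy
        rw [dif_neg he]
        rfl

theorem doubleInl_partMap_eq_doubleInr_partMap_iff {p : G.Part} :
    S.doubleInl.partMap p = S.doubleInr.partMap p ↔ p ∈ S.parts := by
  cases p with
  | inl v => exact (Sum.inl_injective.eq_iff.trans eq_comm).trans secondCopy_eq_inl_iff
  | inr e => exact (Sum.inr_injective.eq_iff.trans eq_comm).trans secondCopy_eq_inl_iff

end Subgraph

def Hom.range {G H : Multigraph} (m : Hom G H) : Subgraph H where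
  verts := Set.range m.vertMap
  edges := {e | Sum.inr e ∈ Set.range m.partMap}
  mem_verts_of_mem_edges := by
    rintro e ⟨p, hp⟩ v hv
    exact m.mem_range_vertMap_of_mem_incid (p := p) (hp ▸ hv)

theorem Hom.partMap_mem_range_parts {G H : Multigraph} (m : Hom G H) (p : G.Part) :
    m.partMap p ∈ m.range.parts := by
  rcases hp : m.partMap p with v | e
  · exact m.mem_range_vertMap_of_partMap_eq_inl hp
  · exact ⟨p, hp⟩

theorem Hom.mem_range_partMap_of_mem_range_parts {G H : Multigraph} (m : Hom G H)
    {p : H.Part} (hp : p ∈ m.range.parts) : p ∈ Set.range m.partMap := by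
  cases p with
  | inl v =>
    obtain ⟨a, rfl⟩ := hp
    exact ⟨Sum.inl a, m.partMap_vert a⟩
  | inr e => exact hp

theorem Hom.partMap_surjective_of_isCoequalizer {A I R : Multigraph} {p0 p1 : Hom R A}
    {q : Hom A I} (hq : q.comp p0 = q.comp p1)
    (hqUniv : ∀ (X : Multigraph) (m : Hom A X), m.comp p0 = m.comp p1 →
      ∃! t : Hom I X, t.comp q = m) :
    Function.Surjective q.partMap := by
  set q' := q.range.codRestrict q q.partMap_mem_range_parts
  have hq' : q'.comp p0 = q'.comp p1 := q.range.incl_isMono _ _ <| by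
    rw [← Hom.comp_assoc, ← Hom.comp_assoc, q.range.incl_comp_codRestrict, hq]
  obtain ⟨t, ht, -⟩ := hqUniv _ q' hq'
  have hsplit : q.range.incl.comp t = Hom.id I := (hqUniv I q hq).unique
    (by rw [Hom.comp_assoc, ht, q.range.incl_comp_codRestrict]) (Hom.id_comp q)
  intro p
  apply q.mem_range_partMap_of_mem_range_parts
  simpa only [← Hom.comp_partMap, hsplit, Hom.id_partMap] using
    q.range.incl_partMap_mem (t.partMap p)

theorem Hom.mem_range_partMap_of_cokernelPair {A B C : Multigraph} {f : Hom A B}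
    {i0 i1 : Hom B C}
    (hcokerUniv : ∀ (X : Multigraph) (j0 j1 : Hom B X), j0.comp f = j1.comp f →
      ∃! t : Hom C X, t.comp i0 = j0 ∧ t.comp i1 = j1)
    {b : B.Part} (hb : i0.partMap b = i1.partMap b) : b ∈ Set.range f.partMap := by
  have hf : f.range.doubleInl.comp f = f.range.doubleInr.comp f :=
    Hom.partMap_injective (funext fun p =>
      f.range.doubleInl_partMap_eq_doubleInr_partMap_iff.mpr (f.partMap_mem_range_parts p))
  obtain ⟨t, ⟨ht0, ht1⟩, -⟩ := hcokerUniv _ _ _ hf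
  apply f.mem_range_partMap_of_mem_range_parts
  rw [← f.range.doubleInl_partMap_eq_doubleInr_partMap_iff, ← ht0, ← ht1]
  exact congrArg t.partMap hb

end Multigraph

open Multigraph in
theorem fundamentalMorphismTheorem_grphs_general
    (A B : Multigraph) (f : Hom A B)
    -- the kernel pair of f : a pullback of f along itself
    (R : Multigraph) (p0 p1 : Hom R A)
    (hkerUniv : ∀ (X : Multigraph) (a b : Hom X A), f.comp a = f.comp b →
      ∃! t : Hom X R, p0.comp t = a ∧ p1.comp t = b)
    -- q : A → I, a coequalizer of the kernel pair
    (I : Multigraph) (q : Hom A I)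
    (hq : q.comp p0 = q.comp p1)
    (hqUniv : ∀ (X : Multigraph) (m : Hom A X), m.comp p0 = m.comp p1 →
      ∃! t : Hom I X, t.comp q = m)
    -- the cokernel pair of f : a pushout of f along itself
    (C : Multigraph) (i0 i1 : Hom B C)
    (hcokerUniv : ∀ (X : Multigraph) (j0 j1 : Hom B X), j0.comp f = j1.comp f →
      ∃! t : Hom C X, t.comp i0 = j0 ∧ t.comp i1 = j1)
    -- q* : I* → B, an equalizer of the cokernel pair
    (Istar : Multigraph) (qstar : Hom Istar B)
    (hqs : i0.comp qstar = i1.comp qstar)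
    (hqsUniv : ∀ (X : Multigraph) (m : Hom X B), i0.comp m = i1.comp m →
      ∃! t : Hom X Istar, qstar.comp t = m)
    -- the unique comparison morphism h with q* ∘ h ∘ q = f
    (h : Hom I Istar)
    (hcomm : qstar.comp (h.comp q) = f) :
    ∃ hinv : Hom Istar I, hinv.comp h = Hom.id I ∧ h.comp hinv = Hom.id Istar := by
  have hq_surj := Hom.partMap_surjective_of_isCoequalizer hq hqUniv
  have hqs_inj := (Hom.isMono_of_isEqualizer hqs hqsUniv).partMap_injective
  have hcomm' (p : A.Part) : qstar.partMap (h.partMap (q.partMap p)) = f.partMap p :=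
    congrFun (congrArg Hom.partMap hcomm) p
  refine h.exists_inverse_of_bijective ⟨fun x y hxy => ?_, fun y => ?_⟩
  · obtain ⟨a, rfl⟩ := hq_surj x
    obtain ⟨b, rfl⟩ := hq_surj y
    exact Hom.partMap_eq_of_kernelPair hkerUniv hq (by rw [← hcomm', ← hcomm', hxy])
  · obtain ⟨a, ha⟩ := Hom.mem_range_partMap_of_cokernelPair hcokerUniv
      (congrFun (congrArg Hom.partMap hqs) y)
    exact ⟨q.partMap a, hqs_inj (by rw [hcomm', ha])⟩

open Multigraph in
/-- **The Fundamental Morphism Theorem in Grphs.** Given a morphism `f : A → B`,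
a kernel pair `p0, p1 : R → A` of `f` (a pullback of `f` along itself),
a coequalizer `q : A → I` of the kernel pair, a cokernel pair `i0, i1 : B → C`
of `f` (a pushout of `f` along itself), and an equalizer `q* : I* → B` of the
cokernel pair, the unique morphism `h : I → I*` with `q* ∘ h ∘ q = f` is an
isomorphism. -/
theorem fundamentalMorphismTheorem_grphs
    (A B : Multigraph) (f : Hom A B)
    -- the kernel pair of f : a pullback of f along itself
    (R : Multigraph) (p0 p1 : Hom R A)
    (hker : f.comp p0 = f.comp p1)
    (hkerUniv : ∀ (X : Multigraph) (a b : Hom X A), f.comp a = f.comp b →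
      ∃! t : Hom X R, p0.comp t = a ∧ p1.comp t = b)
    -- q : A → I, a coequalizer of the kernel pair
    (I : Multigraph) (q : Hom A I)
    (hq : q.comp p0 = q.comp p1)
    (hqUniv : ∀ (X : Multigraph) (m : Hom A X), m.comp p0 = m.comp p1 →
      ∃! t : Hom I X, t.comp q = m)
    -- the cokernel pair of f : a pushout of f along itself
    (C : Multigraph) (i0 i1 : Hom B C)
    (hcoker : i0.comp f = i1.comp f)
    (hcokerUniv : ∀ (X : Multigraph) (j0 j1 : Hom B X), j0.comp f = j1.comp f →
      ∃! t : Hom C X, t.comp i0 = j0 ∧ t.comp i1 = j1)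
    -- q* : I* → B, an equalizer of the cokernel pair
    (Istar : Multigraph) (qstar : Hom Istar B)
    (hqs : i0.comp qstar = i1.comp qstar)
    (hqsUniv : ∀ (X : Multigraph) (m : Hom X B), i0.comp m = i1.comp m →
      ∃! t : Hom X Istar, qstar.comp t = m)
    -- the unique comparison morphism h with q* ∘ h ∘ q = f
    (h : Hom I Istar)
    (hcomm : qstar.comp (h.comp q) = f) :
    ∃ hinv : Hom Istar I, hinv.comp h = Hom.id I ∧ h.comp hinv = Hom.id Istar :=
  fundamentalMorphismTheorem_grphs_general A B f R p0 p1 hkerUniv I q hq hqUniv C i0 i1 hcokerUniv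
    Istar qstar hqs hqsUniv h hcomm
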